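/- arXiv:2310.01820 — 2 statements merged into one kernel-verified Lean document; each statement's English description precedes it below -/
import Mathlib

section
/- (Reverse Fano / Kovalevsky bound) Let Y take values in a finite set and Z be any random variable, and let ε be the minimum error probability P(g(Z) ≠ Y) over all deterministic decoders g. Then H(Y|Z) ≥ (1 − (1−ε)⌊1/(1−ε)⌋)(1 + ⌊1/(1−ε)⌋)·ln(1 + ⌊1/(1−ε)⌋) − (ε − (1−ε)⌊1/(1−ε)⌋)·⌊1/(1−ε)⌋·ln⌊1/(1−ε)⌋, for ε ∈ (0,1). -/
open Real Finset
open scoped Classical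

noncomputable section

/-- Probability of an event under a pmf `p` on a finite sample space. -/
def prob {Ω : Type*} [Fintype Ω] (p : Ω → ℝ) (A : Ω → Prop) : ℝ :=
  ∑ ω ∈ Finset.univ.filter (fun ω => A ω), p ω

/-- Pushforward distribution of a random variable `X` under pmf `p`. -/
def dist' {Ω α : Type*} [Fintype Ω] (p : Ω → ℝ) (X : Ω → α) : α → ℝ :=
  fun a => ∑ ω ∈ Finset.univ.filter (fun ω => X ω = a), p ω

/-- Shannon entropy of a pmf on a finite alphabet (with `0 log 0 = 0`). -/
def entFun {α : Type*} [Fintype α] (q : α → ℝ) : ℝ := -∑ a, q a * Real.log (q a)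

/-- Entropy `H(X)` of a random variable. -/
def ent {Ω α : Type*} [Fintype Ω] [Fintype α] (p : Ω → ℝ) (X : Ω → α) : ℝ :=
  entFun (dist' p X)

/-- Conditional entropy `H(X | Z) = H(X, Z) - H(Z)`. -/
def condEnt {Ω α β : Type*} [Fintype Ω] [Fintype α] [Fintype β]
    (p : Ω → ℝ) (X : Ω → α) (Z : Ω → β) : ℝ :=
  ent p (fun ω => (X ω, Z ω)) - ent p Z

/-- Mutual information `I(X; Z) = H(X) - H(X | Z)`. -/
def mutInf {Ω α β : Type*} [Fintype Ω] [Fintype α] [Fintype β]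
    (p : Ω → ℝ) (X : Ω → α) (Z : Ω → β) : ℝ :=
  ent p X - condEnt p X Z

/-- Conditional mutual information `I(X; Z | W) = H(X | W) - H(X | Z, W)`. -/
def condMI {Ω α β γ : Type*} [Fintype Ω] [Fintype α] [Fintype β] [Fintype γ]
    (p : Ω → ℝ) (X : Ω → α) (Z : Ω → β) (W : Ω → γ) : ℝ :=
  condEnt p X W - condEnt p X (fun ω => (Z ω, W ω))

/-- `p` is a probability mass function. -/
def IsPMF {Ω : Type*} [Fintype Ω] (p : Ω → ℝ) : Prop :=
  (∀ ω, 0 ≤ p ω) ∧ ∑ ω, p ω = 1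

/-- Binary entropy function (with the convention `0 log 0 = 0`). -/
def binEnt (x : ℝ) : ℝ := -x * Real.log x - (1 - x) * Real.log (1 - x)

/-! Among vectors with entries in `[0, m]` and a fixed sum, the concave functional
`∑ negMulLog` is smallest at `(m, …, m, r, 0, …)`: two entries can always be spread apart
until one of them reaches `0` or `m`. For a distribution with largest mass `m` this vertex value
is concave in `m` between consecutive nodes `1 / (j + 1)`, `1 / j`, where it equals `log (j + 1)`
and `log j`. The nodes lie on a convex curve, so the vertex value stays above the line through
any two consecutive nodes `(1 / (k + 1), log (k + 1))`, `(1 / k, log k)`. This line is affine: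
applied to each conditional distribution `P(· | z)` and averaged over `z`, it bounds `H(Y | Z)` by
its value at `∑ z, max_y P(y, z) = 1 - ε`, for every `k ≥ 1`. -/

theorem ConcaveOn.add_le_add_of_add_eq {s : Set ℝ} {f : ℝ → ℝ} (hf : ConcaveOn ℝ s f)
    {a b c d : ℝ} (ha : a ∈ s) (hd : d ∈ s) (hab : a ≤ b) (hbd : b ≤ d) (h : a + d = b + c) :
    f a + f d ≤ f b + f c := by
  rcases hab.eq_or_lt with rfl | hab
  · rw [show d = c by linarith]
  have hda : d - a ≠ 0 := (sub_pos.2 (hab.trans_le hbd)).ne'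
  set t := (d - b) / (d - a)
  have ht₀ : 0 ≤ t := div_nonneg (by linarith) (by linarith)
  have ht₁ : 0 ≤ 1 - t := by rw [sub_nonneg, div_le_one (by linarith)]; linarith
  have hb : t • a + (1 - t) • d = b := by simp only [smul_eq_mul, t]; field_simp; ring
  have hc : (1 - t) • a + t • d = c := by
    rw [show c = a + d - b by linarith]
    simp only [smul_eq_mul, t]
    field_simp
    ring
  have h₁ := hf.2 ha hd ht₀ ht₁ (by ring)
  have h₂ := hf.2 ha hd ht₁ ht₀ (by ring)
  rw [hb] at h₁
  rw [hc] at h₂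
  simp only [smul_eq_mul] at h₁ h₂
  linarith

theorem ConcaveOn.nat_mul_add_le_sum {ι : Type*} {f : ℝ → ℝ} (hf : ConcaveOn ℝ (Set.Ici 0) f)
    (hf₀ : f 0 = 0) {m : ℝ} (s : Finset ι) {q : ι → ℝ} (hq₀ : ∀ i ∈ s, 0 ≤ q i)
    (hqm : ∀ i ∈ s, q i ≤ m) {n : ℕ} {r : ℝ} (hr₀ : 0 ≤ r) (hrm : r ≤ m)
    (hsum : ∑ i ∈ s, q i = n * m + r) :
    n * f m + f r ≤ ∑ i ∈ s, f (q i) := by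
  induction s using Finset.induction_on generalizing n r with
  | empty =>
    rw [sum_empty] at hsum
    obtain rfl : r = 0 := by nlinarith [mul_nonneg n.cast_nonneg (hr₀.trans hrm)]
    rcases mul_eq_zero.1 (by linarith : (n : ℝ) * m = 0) with h | h <;> simp [h, hf₀]
  | insert x s hx ih =>
    rw [forall_mem_insert] at hq₀ hqm
    obtain ⟨hx₀, hq₀⟩ := hq₀
    obtain ⟨hxm, hqm⟩ := hqm
    rw [sum_insert hx] at hsum ⊢
    have hs₀ : 0 ≤ ∑ i ∈ s, q i := sum_nonneg hq₀
    -- Either `q x` fits into the remainder `r`, or the remainder borrows one block of size `m`.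
    rcases le_or_gt (q x) r with hxr | hrx
    · have h₁ := ih hq₀ hqm (n := n) (r := r - q x) (by linarith) (by linarith) (by linarith)
      have h₂ := hf.add_le_add_of_add_eq (a := 0) (b := r - q x) (c := q x) (d := r)
        (Set.mem_Ici.2 le_rfl) hr₀ (by linarith) (by linarith) (by ring)
      linarith
    · obtain ⟨n, rfl⟩ : ∃ n', n = n' + 1 := Nat.exists_eq_succ_of_ne_zero <| by
        rintro rfl
        simp only [Nat.cast_zero, zero_mul, zero_add] at hsum
        linarith
      push_cast at hsum ⊢
      have h₁ := ih hq₀ hqm (n := n) (r := m + r - q x) (by linarith) (by linarith) (by linarith)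
      have h₂ := hf.add_le_add_of_add_eq (a := r) (b := m + r - q x) (c := q x) (d := m)
        hr₀ (hr₀.trans hrm) (by linarith) (by linarith) (by ring)
      linarith

/-- `fanoLine k 1` is the line through `(1 / (k + 1), log (k + 1))` and `(1 / k, log k)`;
`fanoLine k c m` is its homogenization, linear in `(c, m)`. -/
def fanoLine (k : ℕ) (c m : ℝ) : ℝ :=
  c * ((k + 1) * log (k + 1) - k * log k) - k * (k + 1) * (log (k + 1) - log k) * m

lemma fanoLine_sum {ι : Type*} (k : ℕ) (s : Finset ι) (c m : ι → ℝ) :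
    fanoLine k (∑ i ∈ s, c i) (∑ i ∈ s, m i) = ∑ i ∈ s, fanoLine k (c i) (m i) := by
  simp only [fanoLine, sum_mul, mul_sum, sum_sub_distrib]

lemma Real.inv_add_one_le_log_add_one_sub_log {x : ℝ} (hx : 0 < x) :
    (x + 1)⁻¹ ≤ log (x + 1) - log x := by
  have h := one_sub_inv_le_log_of_pos (show 0 < (x + 1) / x by positivity)
  rw [log_div (by positivity) hx.ne', inv_div] at h
  convert h using 1
  field_simp
  ring

lemma Real.log_add_one_sub_log_le_inv {x : ℝ} (hx : 0 < x) :
    log (x + 1) - log x ≤ x⁻¹ := by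
  have h := log_le_sub_one_of_pos (show 0 < (x + 1) / x by positivity)
  rw [log_div (by positivity) hx.ne'] at h
  convert h using 1
  field_simp
  ring

lemma fanoLine_one_div_le_log {k j : ℕ} (hk : 1 ≤ k) (hj : 1 ≤ j) :
    fanoLine k 1 (1 / j) ≤ log j := by
  have hk' : (0 : ℝ) < k := by exact_mod_cast hk
  have hj' : (0 : ℝ) < j := by exact_mod_cast hj
  have hd₁ := Real.inv_add_one_le_log_add_one_sub_log hk'
  have hd₂ := Real.log_add_one_sub_log_le_inv hk'
  set d := log (k + 1) - log k with hd
  have hs₁ : (k : ℝ) ≤ k * (k + 1) * d :=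
    calc (k : ℝ) = k * (k + 1) * ((k : ℝ) + 1)⁻¹ := by field_simp
      _ ≤ k * (k + 1) * d := by gcongr
  have hs₂ : k * (k + 1) * d ≤ (k + 1 : ℝ) :=
    calc k * (k + 1) * d ≤ k * (k + 1) * (k : ℝ)⁻¹ := by gcongr
      _ = k + 1 := by field_simp
  have hk₁ : fanoLine k 1 (1 / k) = log k := by simp only [fanoLine]; field_simp; ring
  have hk₂ : fanoLine k 1 (1 / (k + 1)) = log (k + 1) := by simp only [fanoLine]; field_simp; ring
  -- From a node `1 / a` where the line meets `log`, the tangent bound `log a - log j ≤ a / j - 1`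
  -- reaches `1 / j`.
  have hnode : ∀ a : ℝ, 0 < a → fanoLine k 1 (1 / a) = log a →
      (k * (k + 1) * d - a) * (1 / a - 1 / j) ≤ 0 → fanoLine k 1 (1 / j) ≤ log j := by
    intro a ha hfa hsign
    have hlog := log_le_sub_one_of_pos (show 0 < a / j by positivity)
    rw [log_div ha.ne' hj'.ne'] at hlog
    have hshift : fanoLine k 1 (1 / j) =
        fanoLine k 1 (1 / a) + k * (k + 1) * d * (1 / a - 1 / j) := by
      simp only [fanoLine, hd]; ring
    have hsplit : (k * (k + 1) * d - a) * (1 / a - 1 / j) =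
        k * (k + 1) * d * (1 / a - 1 / j) + (a / j - 1) := by
      field_simp; ring
    linarith
  rcases le_or_gt j k with hjk | hkj
  · refine hnode k hk' hk₁ (mul_nonpos_of_nonneg_of_nonpos (by linarith) ?_)
    rw [sub_nonpos]
    exact one_div_le_one_div_of_le hj' (by exact_mod_cast hjk)
  · refine hnode (k + 1) (by positivity) hk₂ (mul_nonpos_of_nonpos_of_nonneg (by linarith) ?_)
    rw [sub_nonneg]
    exact one_div_le_one_div_of_le (by positivity) (by exact_mod_cast hkj)

lemma Real.negMulLog_one_div (x : ℝ) : negMulLog (1 / x) = log x / x := by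
  simp [negMulLog, log_inv, div_eq_inv_mul]

lemma fanoLine_le_mul_negMulLog_add {k j : ℕ} (hk : 1 ≤ k) (hj : 1 ≤ j) {m : ℝ}
    (hm₁ : 1 / ((j : ℝ) + 1) ≤ m) (hm₂ : m ≤ 1 / j) :
    fanoLine k 1 m ≤ j * negMulLog m + negMulLog (1 - j * m) := by
  have hj' : (0 : ℝ) < j := by exact_mod_cast hj
  have hjm : j * m ≤ 1 := by rwa [le_div_iff₀ hj', mul_comm] at hm₂
  have hjm' : 1 ≤ (j + 1) * m := by rwa [div_le_iff₀ (by positivity), mul_comm] at hm₁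
  -- `m = t / (j + 1) + (1 - t) / j` and `1 - j * m = t / (j + 1) + (1 - t) * 0`.
  set t := (j + 1) * (1 - j * m) with ht
  have ht₀ : 0 ≤ t := mul_nonneg (by positivity) (by linarith)
  have ht₁ : 0 ≤ 1 - t := by nlinarith
  have hm : t • (1 / ((j : ℝ) + 1)) + (1 - t) • (1 / (j : ℝ)) = m := by
    simp only [smul_eq_mul, ht]; field_simp; ring
  have hr : t • (1 / ((j : ℝ) + 1)) + (1 - t) • (0 : ℝ) = 1 - j * m := by
    simp only [smul_eq_mul, ht, mul_zero, add_zero]; field_simp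
  have hx₁ : 1 / ((j : ℝ) + 1) ∈ Set.Ici 0 := Set.mem_Ici.2 (by positivity)
  have hx₂ : 1 / (j : ℝ) ∈ Set.Ici 0 := Set.mem_Ici.2 (by positivity)
  have h₁ := concaveOn_negMulLog.2 hx₁ hx₂ ht₀ ht₁ (by ring)
  have h₂ := concaveOn_negMulLog.2 hx₁ (Set.mem_Ici.2 le_rfl) ht₀ ht₁ (by ring)
  rw [hm] at h₁
  rw [hr] at h₂
  simp only [smul_eq_mul, negMulLog_one_div, negMulLog_zero, mul_zero, add_zero] at h₁ h₂
  have hline : fanoLine k 1 m =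
      t * fanoLine k 1 (1 / ((j : ℝ) + 1)) + (1 - t) * fanoLine k 1 (1 / j) := by
    rw [← hm]; simp only [fanoLine, smul_eq_mul]; ring
  have hnode₁ := fanoLine_one_div_le_log hk (Nat.le_succ_of_le hj)
  have hnode₂ := fanoLine_one_div_le_log hk hj
  push_cast at hnode₁
  calc fanoLine k 1 m ≤ t * log (j + 1) + (1 - t) * log j := by
        rw [hline]; gcongr
    _ = j * (t * (log (j + 1) / (j + 1)) + (1 - t) * (log j / j)) +
          t * (log (j + 1) / (j + 1)) := by
        field_simp; ring
    _ ≤ j * negMulLog m + negMulLog (1 - j * m) := by gcongr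

lemma fanoLine_le_sum_negMulLog {ι : Type*} [Fintype ι] {k : ℕ} (hk : 1 ≤ k) {q : ι → ℝ}
    (hq₀ : ∀ i, 0 ≤ q i) (hq₁ : ∑ i, q i = 1) {m : ℝ} (hqm : ∀ i, q i ≤ m) (hm₀ : 0 < m)
    (hm₁ : m ≤ 1) :
    fanoLine k 1 m ≤ ∑ i, negMulLog (q i) := by
  set n := ⌊1 / m⌋₊
  have hn : 1 ≤ n := Nat.one_le_floor_iff _ |>.2 (one_le_one_div hm₀ hm₁)
  have hnm : n * m ≤ 1 := (le_div_iff₀ hm₀).1 (Nat.floor_le (by positivity))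
  have hnm' : 1 < (n + 1) * m := (div_lt_iff₀ hm₀).1 (Nat.lt_floor_add_one _)
  calc fanoLine k 1 m ≤ n * negMulLog m + negMulLog (1 - n * m) :=
        fanoLine_le_mul_negMulLog_add hk hn ((div_le_iff₀ (by positivity)).2 (by linarith))
          ((le_div_iff₀ (by positivity)).2 (by linarith))
    _ ≤ ∑ i, negMulLog (q i) :=
        concaveOn_negMulLog.nat_mul_add_le_sum negMulLog_zero univ (fun i _ => hq₀ i)
          (fun i _ => hqm i) (by linarith) (by linarith) (by rw [hq₁]; ring)

lemma fanoLine_le_sum_negMulLog_sub {ι : Type*} [Fintype ι] {k : ℕ} (hk : 1 ≤ k) {q : ι → ℝ}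
    (hq₀ : ∀ i, 0 ≤ q i) {i₀ : ι} (hi₀ : ∀ i, q i ≤ q i₀) :
    fanoLine k (∑ i, q i) (q i₀) ≤ ∑ i, negMulLog (q i) - negMulLog (∑ i, q i) := by
  set c := ∑ i, q i with hc
  have hqc : q i₀ ≤ c := single_le_sum (fun i _ => hq₀ i) (mem_univ i₀)
  rcases (hq₀ i₀).eq_or_lt with hq | hq
  · have hzero : ∀ i, q i = 0 := fun i => le_antisymm (hq ▸ hi₀ i) (hq₀ i)
    simp [hc, hzero, fanoLine]
  have hc₀ : 0 < c := hq.trans_le hqc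
  have hnorm := fanoLine_le_sum_negMulLog hk (q := fun i => q i / c)
    (fun i => div_nonneg (hq₀ i) hc₀.le) (by rw [← sum_div, div_self hc₀.ne'])
    (fun i => div_le_div_of_nonneg_right (hi₀ i) hc₀.le) (div_pos hq hc₀)
    ((div_le_one hc₀).2 hqc)
  have hscale : fanoLine k c (q i₀) = c * fanoLine k 1 (q i₀ / c) := by
    simp only [fanoLine]; field_simp
  have hent : ∑ i, negMulLog (q i) - negMulLog c = c * ∑ i, negMulLog (q i / c) := by
    have h i : negMulLog (q i) = q i / c * negMulLog c + c * negMulLog (q i / c) := by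
      rw [← negMulLog_mul, mul_div_cancel₀ _ hc₀.ne']
    simp only [h, sum_add_distrib, ← sum_mul, ← mul_sum, ← sum_div, ← hc, div_self hc₀.ne',
      one_mul]
    ring
  rw [hscale, hent]
  exact mul_le_mul_of_nonneg_left hnorm hc₀.le

section Distributions

variable {Ω 𝒴 𝒵 : Type*} [Fintype Ω] (p : Ω → ℝ) (Y : Ω → 𝒴) (Z : Ω → 𝒵)

lemma entFun_eq_sum_negMulLog {α : Type*} [Fintype α] (q : α → ℝ) :
    entFun q = ∑ a, negMulLog (q a) := by
  simp only [entFun, negMulLog, neg_mul, sum_neg_distrib]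

lemma sum_dist' {α : Type*} [Fintype α] (X : Ω → α) : ∑ a, dist' p X a = ∑ ω, p ω :=
  sum_fiberwise univ X p

lemma sum_dist'_pair [Fintype 𝒴] (z : 𝒵) :
    ∑ y, dist' p (fun ω => (Y ω, Z ω)) (y, z) = dist' p Z z := by
  simp only [dist']
  rw [← sum_fiberwise (univ.filter fun ω => Z ω = z) Y p]
  refine sum_congr rfl fun y _ => sum_congr ?_ fun _ _ => rfl
  ext ω
  simp [Prod.ext_iff, and_comm]

lemma sum_dist'_graph [Fintype 𝒵] (g : 𝒵 → 𝒴) :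
    ∑ z, dist' p (fun ω => (Y ω, Z ω)) (g z, z) = prob p (fun ω => g (Z ω) = Y ω) := by
  simp only [prob, dist']
  rw [← sum_fiberwise (univ.filter fun ω => g (Z ω) = Y ω) Z p]
  refine sum_congr rfl fun z _ => sum_congr ?_ fun _ _ => rfl
  ext ω
  simp only [mem_filter, mem_univ, true_and, Prod.ext_iff]
  constructor
  · rintro ⟨h, rfl⟩; exact ⟨h.symm, rfl⟩
  · rintro ⟨h, rfl⟩; exact ⟨h.symm, rfl⟩

lemma prob_not (A : Ω → Prop) : prob p (fun ω => ¬A ω) = ∑ ω, p ω - prob p A := by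
  rw [prob, prob, ← sum_filter_add_sum_filter_not univ A p, add_sub_cancel_left]
  congr

lemma condEnt_eq_sum [Fintype 𝒴] [Fintype 𝒵] :
    condEnt p Y Z = ∑ z, (∑ y, negMulLog (dist' p (fun ω => (Y ω, Z ω)) (y, z)) -
      negMulLog (∑ y, dist' p (fun ω => (Y ω, Z ω)) (y, z))) := by
  simp only [condEnt, ent, entFun_eq_sum_negMulLog, Fintype.sum_prod_type_right, sum_dist'_pair,
    sum_sub_distrib]

end Distributions

/-- **Reverse Fano (Kovalevsky) bound.** If `ε` is the minimum error probability
`P(g(Z) ≠ Y)` over all deterministic decoders `g`, and `ε ∈ (0,1)`, then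
`H(Y|Z) ≥ (1-(1-ε)⌊1/(1-ε)⌋)(1+⌊1/(1-ε)⌋)ln(1+⌊1/(1-ε)⌋)
          - (ε-(1-ε)⌊1/(1-ε)⌋)⌊1/(1-ε)⌋ln⌊1/(1-ε)⌋` (entropy in nats). -/
theorem reverse_fano {Ω 𝒴 𝒵 : Type*} [Fintype Ω] [Fintype 𝒴] [Fintype 𝒵]
    (p : Ω → ℝ) (hp : IsPMF p) (Y : Ω → 𝒴) (Z : Ω → 𝒵)
    (ε : ℝ)
    (hε : IsLeast {e : ℝ | ∃ g : 𝒵 → 𝒴, e = prob p (fun ω => g (Z ω) ≠ Y ω)} ε)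
    (hε0 : 0 < ε) (hε1 : ε < 1) :
    (1 - (1 - ε) * (⌊1 / (1 - ε)⌋ : ℝ)) * (1 + (⌊1 / (1 - ε)⌋ : ℝ)) *
        Real.log (1 + (⌊1 / (1 - ε)⌋ : ℝ))
      - (ε - (1 - ε) * (⌊1 / (1 - ε)⌋ : ℝ)) * (⌊1 / (1 - ε)⌋ : ℝ) *
        Real.log (⌊1 / (1 - ε)⌋ : ℝ)
      ≤ condEnt p Y Z := by
  obtain ⟨hp₀, hp₁⟩ := hp
  set P := dist' p (fun ω => (Y ω, Z ω))
  obtain ⟨g₀, hg₀⟩ := hε.1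
  obtain ⟨ω, -, -⟩ := exists_ne_zero_of_sum_ne_zero (hp₁ ▸ one_ne_zero : ∑ ω, p ω ≠ 0)
  have : Nonempty 𝒴 := ⟨g₀ (Z ω)⟩
  choose g hg using fun z => Finite.exists_max fun y => P (y, z)
  have hg_err : ∑ z, P (g z, z) = 1 - ε := by
    have hle := hε.2 ⟨g, rfl⟩
    rw [prob_not, ← sum_dist'_graph, hp₁] at hle hg₀
    linarith [sum_le_sum fun z (_ : z ∈ univ) => hg z (g₀ z)]
  have hk : 1 ≤ ⌊1 / (1 - ε)⌋₊ :=
    Nat.one_le_floor_iff _ |>.2 (one_le_one_div (by linarith) (by linarith))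
  rw [← natCast_floor_eq_intCast_floor (by positivity)]
  calc _ = fanoLine ⌊1 / (1 - ε)⌋₊ (∑ z, ∑ y, P (y, z)) (∑ z, P (g z, z)) := by
        rw [hg_err, ← Fintype.sum_prod_type_right, sum_dist', hp₁, fanoLine]
        ring_nf
    _ = ∑ z, fanoLine ⌊1 / (1 - ε)⌋₊ (∑ y, P (y, z)) (P (g z, z)) := fanoLine_sum ..
    _ ≤ ∑ z, (∑ y, negMulLog (P (y, z)) - negMulLog (∑ y, P (y, z))) :=
        sum_le_sum fun z _ =>
          fanoLine_le_sum_negMulLog_sub hk (fun _ => sum_nonneg fun ω _ => hp₀ ω) (hg z)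
    _ = condEnt p Y Z := (condEnt_eq_sum p Y Z).symm
end
end

section
/- Consider a deterministic binary classification where Y = 1{g_exp ⊆ G} for a fixed subgraph g_exp, with the classifier f(G) = 1{g_exp ⊆ G}, and a stochastic explanation Ψ_p that outputs g_exp with probability p and the empty graph with probability 1−p whenever g_exp ⊆ G (and empty otherwise). If p₁ ≥ p₂ then I(Ŷ; G | 1_{Ψ_{p₁}(G)}) ≤ I(Ŷ; G | 1_{Ψ_{p₂}(G)}); i.e., the conditional mutual information is nonincreasing in p. -/
open Real Finset
open scoped Classical

noncomputable section

/-
Since `Ŷ = 1{g_exp ⊆ G}` is a function of `G`, the term `H(Ŷ | G, 1_Ψ)` vanishes and the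
conditional mutual information is just `H(Ŷ | 1_Ψ)`. With `q = P(g_exp ⊆ G)` the pair `(Ŷ, 1_Ψ)`
takes the values `(1,1), (1,0), (0,0)` with probabilities `q p, q (1 - p), 1 - q`, which gives
`H(Ŷ | 1_Ψ) = η(x) + η(1 - q) - η(x + 1 - q)` for `x = q (1 - p)` and `η t = -t log t`.
As `η` is concave its increments `η(x + c) - η(x)` decrease in `x`, so this is increasing in `x`,
i.e. decreasing in `p`.
-/

section Entropy

variable {Ω α β : Type*} [Fintype Ω]

lemma dist'_comp [Fintype β] (p : Ω → ℝ) (Z : Ω → β) (φ : β → α) :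
    dist' p (fun ω => φ (Z ω)) = dist' (dist' p Z) φ := by
  funext a
  simp only [dist']
  convert (sum_fiberwise_eq_sum_filter univ (univ.filter fun b => φ b = a) Z p).symm
    using 2
  simp

lemma ent_comp [Fintype α] [Fintype β] (p : Ω → ℝ) (Z : Ω → β) (φ : β → α) :
    ent p (fun ω => φ (Z ω)) = ent (dist' p Z) φ := by
  rw [ent, ent, dist'_comp]

lemma condEnt_comp {γ : Type*} [Fintype α] [Fintype β] [Fintype γ] (p : Ω → ℝ) (Z : Ω → γ)
    (φ : γ → α) (ψ : γ → β) :
    condEnt p (fun ω => φ (Z ω)) (fun ω => ψ (Z ω)) = condEnt (dist' p Z) φ ψ := by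
  rw [condEnt, condEnt, ← ent_comp, ← ent_comp]

lemma dist'_apply_of_injective (p : Ω → ℝ) {X : Ω → α} (hX : Function.Injective X) (ω : Ω) :
    dist' p X (X ω) = p ω := by
  simp [dist', hX.eq_iff, sum_filter]

lemma dist'_apply_of_notMem_range (p : Ω → ℝ) {X : Ω → α} {a : α} (ha : a ∉ Set.range X) :
    dist' p X a = 0 :=
  sum_eq_zero fun ω hω => absurd ⟨ω, (mem_filter.1 hω).2⟩ ha

lemma entFun_dist'_of_injective [Fintype α] (p : Ω → ℝ) {X : Ω → α}
    (hX : Function.Injective X) : entFun (dist' p X) = entFun p := by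
  rw [entFun, entFun, neg_inj]
  refine (Fintype.sum_of_injective X hX _ _ (fun a ha => ?_) fun ω => ?_).symm
  · rw [dist'_apply_of_notMem_range p ha, zero_mul]
  · rw [dist'_apply_of_injective p hX]

lemma condEnt_comp_self [Fintype α] [Fintype β] (p : Ω → ℝ) (Z : Ω → β) (φ : β → α) :
    condEnt p (fun ω => φ (Z ω)) Z = 0 := by
  have hinj : Function.Injective fun b => (φ b, b) := fun _ _ h => congrArg Prod.snd h
  rw [condEnt, ent_comp p Z fun b => (φ b, b), ent, ent, entFun_dist'_of_injective _ hinj,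
    sub_self]

lemma dist'_nonneg {p : Ω → ℝ} (hp : ∀ ω, 0 ≤ p ω) (X : Ω → α)
    (a : α) : 0 ≤ dist' p X a :=
  sum_nonneg fun ω _ => hp ω

lemma dist'_mul_prodMap [Fintype β] (p : Ω → ℝ) (r : β → ℝ) (X : Ω → α) (a : α) (b : β) :
    dist' (fun x : Ω × β => p x.1 * r x.2) (fun x => (X x.1, x.2)) (a, b)
      = dist' p X a * r b := by
  simp only [dist', sum_filter, Fintype.sum_prod_type, Prod.mk.injEq, ite_and,
    sum_mul]
  refine sum_congr rfl fun ω _ => ?_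
  split_ifs <;> simp

end Entropy

lemma condEnt_fst_and_eq (w : Bool → ℝ) (t : ℝ) :
    condEnt (fun ab : Bool × Bool => w ab.1 * (if ab.2 then t else 1 - t)) Prod.fst
        (fun ab => ab.1 && ab.2)
      = negMulLog (w true * (1 - t)) + negMulLog (w false)
        - negMulLog (w true * (1 - t) + w false) := by
  simp only [condEnt, ent, entFun, dist', sum_filter, Fintype.sum_prod_type,
    Fintype.sum_bool, Prod.mk.injEq, Bool.and_true, Bool.and_false,
    Bool.true_eq_false, Bool.false_eq_true, and_true, and_false, ↓reduceIte,
    add_zero, zero_add, log_zero, mul_zero, negMulLog]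
  rw [← mul_add (w false) t, add_sub_cancel, mul_one]
  ring

lemma ConcaveOn.add_sub_le_add_sub_of_le {s : Set ℝ} {f : ℝ → ℝ} (hf : ConcaveOn ℝ s f)
    {a b c : ℝ} (ha : a ∈ s) (hbc : b + c ∈ s) (hab : a ≤ b) (hc : 0 ≤ c) :
    f (b + c) - f b ≤ f (a + c) - f a := by
  rcases (show a ≤ b + c by linarith).eq_or_lt with h | h
  · obtain rfl : c = 0 := by linarith
    obtain rfl : b = a := by linarith
    rfl
  -- `a + c` and `b` are the two mirror-image convex combinations of `a` and `b + c`.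
  set l := (b - a) / (b + c - a)
  have hl₀ : 0 ≤ l := div_nonneg (by linarith) (by linarith)
  have hl₁ : 0 ≤ 1 - l := by
    rw [sub_nonneg, div_le_one (by linarith)]; linarith
  have h₁ := hf.2 ha hbc hl₀ hl₁ (by ring)
  have h₂ := hf.2 ha hbc hl₁ hl₀ (by ring)
  have e₁ : l • a + (1 - l) • (b + c) = a + c := by
    simp only [l, smul_eq_mul]; field_simp; ring
  have e₂ : (1 - l) • a + l • (b + c) = b := by
    simp only [l, smul_eq_mul]; field_simp; ring
  rw [e₁] at h₁
  rw [e₂] at h₂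
  simp only [smul_eq_mul] at h₁ h₂
  linarith

lemma condMI_indicator_coin_eq {Ω 𝒢 : Type*} [Fintype Ω] [Fintype 𝒢] (p : Ω → ℝ)
    (F : Ω → 𝒢) (c : 𝒢 → Bool) (t : ℝ) :
    condMI (fun x : Ω × Bool => p x.1 * (if x.2 then t else 1 - t))
        (fun x => c (F x.1)) (fun x => F x.1) (fun x => c (F x.1) && x.2)
      = negMulLog (dist' p (fun ω => c (F ω)) true * (1 - t))
        + negMulLog (dist' p (fun ω => c (F ω)) false)
        - negMulLog (dist' p (fun ω => c (F ω)) true * (1 - t)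
            + dist' p (fun ω => c (F ω)) false) := by
  set μ := fun x : Ω × Bool => p x.1 * (if x.2 then t else 1 - t)
  have hdist : dist' μ (fun x => (c (F x.1), x.2))
      = fun ab => dist' p (fun ω => c (F ω)) ab.1 * (if ab.2 then t else 1 - t) :=
    funext fun ⟨a, b⟩ =>
      dist'_mul_prodMap p (fun b => if b then t else 1 - t) (fun ω => c (F ω)) a b
  rw [condMI, condEnt_comp_self μ (fun x => (F x.1, c (F x.1) && x.2)) (fun v => c v.1),
    sub_zero, condEnt_comp μ (fun x => (c (F x.1), x.2)) Prod.fst (fun ab => ab.1 && ab.2),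
    hdist, condEnt_fst_and_eq]

theorem condMI_antitone_in_p_general {Ω 𝒢 : Type*} [Fintype Ω] [Fintype 𝒢]
    (p : Ω → ℝ) (hp : IsPMF p) (G : Ω → 𝒢) (contains : 𝒢 → Bool)
    (p₁ p₂ : ℝ) (hle : p₂ ≤ p₁) (hp₁1 : p₁ ≤ 1) :
    condMI (fun x : Ω × Bool => p x.1 * (if x.2 then p₁ else 1 - p₁))
        (fun x => contains (G x.1)) (fun x => G x.1)
        (fun x => contains (G x.1) && x.2)
      ≤ condMI (fun x : Ω × Bool => p x.1 * (if x.2 then p₂ else 1 - p₂))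
        (fun x => contains (G x.1)) (fun x => G x.1)
        (fun x => contains (G x.1) && x.2) := by
  rw [condMI_indicator_coin_eq, condMI_indicator_coin_eq]
  set w := dist' p (fun ω => contains (G ω))
  have hw : ∀ b, 0 ≤ w b := dist'_nonneg hp.1 _
  have hincr := concaveOn_negMulLog.add_sub_le_add_sub_of_le (b := w true * (1 - p₂))
    (Set.mem_Ici.2 (mul_nonneg (hw true) (sub_nonneg.2 hp₁1)))
    (Set.mem_Ici.2 (add_nonneg (mul_nonneg (hw true) (by linarith)) (hw false)))
    (mul_le_mul_of_nonneg_left (by linarith) (hw true)) (hw false)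
  linarith

/-- In the deterministic classification scenario with `Y = 1{g_exp ⊆ G}`,
classifier `f(G) = 1{g_exp ⊆ G}` and the stochastic explanation `Ψ_p` that
outputs `g_exp` with probability `p` (and `∅` otherwise) whenever `g_exp ⊆ G`:
the conditional mutual information `I(Ŷ; G | 1_{Ψ_p(G)})` is nonincreasing in `p`.
The stochastic explanation is modeled by an independent Bernoulli(`p`) coin on the
extended sample space `Ω × Bool`, with the indicator `1_{Ψ_p(G)}` equal to
`contains (G ω) && b`. -/
theorem condMI_antitone_in_p {Ω 𝒢 : Type*} [Fintype Ω] [Fintype 𝒢]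
    (p : Ω → ℝ) (hp : IsPMF p) (G : Ω → 𝒢) (contains : 𝒢 → Bool)
    (p₁ p₂ : ℝ) (hp₂0 : 0 ≤ p₂) (hle : p₂ ≤ p₁) (hp₁1 : p₁ ≤ 1) :
    condMI (fun x : Ω × Bool => p x.1 * (if x.2 then p₁ else 1 - p₁))
        (fun x => contains (G x.1)) (fun x => G x.1)
        (fun x => contains (G x.1) && x.2)
      ≤ condMI (fun x : Ω × Bool => p x.1 * (if x.2 then p₂ else 1 - p₂))
        (fun x => contains (G x.1)) (fun x => G x.1)
        (fun x => contains (G x.1) && x.2) :=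
  condMI_antitone_in_p_general p hp G contains p₁ p₂ hle hp₁1

end
end
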